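/- arXiv:2201.01379 — 3 statements merged into one kernel-verified Lean document; each statement's English description precedes it below -/
import Mathlib

section
/- Let G = (V,E) be a finite simple graph and let A be a symmetric real matrix indexed by V with A_{ij} = 1 for every non-edge {i,j} (including the diagonal). Let c be the minimal entry of A and ρ its spectral radius. Let I, J ⊆ V be subsets such that the number of ordered pairs (i,j) ∈ I × J with {i,j} ∈ E is at most ε|I|·|J| (so edges inside I ∩ J are counted twice). If (1−c)ε < 1, then |I| · |J| ≤ ( ρ / (1 − (1−c)ε) )². -/
/-!
Test the quadratic form of `A` on the indicator vectors `x = 𝟙_I`, `y = 𝟙_J`. Every entry of `A`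
is at least `c` and equals `1` off the edges, so `x ⬝ᵥ A y = ∑_{I × J} A_{ij}` exceeds
`|I||J| - (1 - c)·e(I, J) ≥ (1 - (1 - c)ε)|I||J|` (the unit diagonal gives `c ≤ 1`). On the other hand, writing a Hermitian matrix in
an orthonormal eigenbasis shows `‖A y‖ ≤ ρ‖y‖`, so by Cauchy–Schwarz
`x ⬝ᵥ A y ≤ ρ‖x‖‖y‖ = ρ √(|I||J|)`.
-/

open Matrix Finset
open scoped InnerProductSpace

theorem Matrix.IsHermitian.norm_toEuclideanLin_le {𝕜 : Type*} [RCLike 𝕜] {n : Type*} [Fintype n]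
    [DecidableEq n] {A : Matrix n n 𝕜} (hA : A.IsHermitian) (y : EuclideanSpace 𝕜 n) :
    ‖A.toEuclideanLin y‖ ≤ (⨆ k, |hA.eigenvalues k|) * ‖y‖ := by
  set ρ := ⨆ k, |hA.eigenvalues k|
  set b := hA.eigenvectorBasis
  have hρ : ∀ k, |hA.eigenvalues k| ≤ ρ := fun k =>
    le_ciSup (f := fun k => |hA.eigenvalues k|) (Set.finite_range _).bddAbove k
  have hρ0 : 0 ≤ ρ := Real.iSup_nonneg fun _ => abs_nonneg _
  have hAb : ∀ k, A.toEuclideanLin (b k) = (hA.eigenvalues k : 𝕜) • b k := fun k => by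
    ext i
    have := congr_fun (hA.mulVec_eigenvectorBasis k) i
    simp only [toLpLin_apply, WithLp.ofLp_toLp, PiLp.smul_apply] at this ⊢
    rw [this, Pi.smul_apply, RCLike.real_smul_eq_coe_smul (K := 𝕜)]
  have hcoord : ∀ k, ⟪b k, A.toEuclideanLin y⟫_𝕜 = hA.eigenvalues k * ⟪b k, y⟫_𝕜 := fun k => by
    rw [← isSymmetric_toEuclideanLin_iff.mpr hA, hAb, inner_smul_left, RCLike.conj_ofReal]
  have hsq : ‖A.toEuclideanLin y‖ ^ 2 ≤ (ρ * ‖y‖) ^ 2 := by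
    calc ‖A.toEuclideanLin y‖ ^ 2 = ∑ k, |hA.eigenvalues k| ^ 2 * ‖⟪b k, y⟫_𝕜‖ ^ 2 := by
          simp only [← b.sum_sq_norm_inner_right, hcoord, norm_mul, RCLike.norm_ofReal, mul_pow]
      _ ≤ ∑ k, ρ ^ 2 * ‖⟪b k, y⟫_𝕜‖ ^ 2 := by
          gcongr with k
          exact hρ k
      _ = (ρ * ‖y‖) ^ 2 := by rw [← mul_sum, b.sum_sq_norm_inner_right, mul_pow]
  exact (pow_le_pow_iff_left₀ (norm_nonneg _) (by positivity) two_ne_zero).mp hsq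

theorem Matrix.IsHermitian.dotProduct_mulVec_le {n : Type*} [Fintype n] [DecidableEq n]
    {A : Matrix n n ℝ} (hA : A.IsHermitian) (x y : n → ℝ) :
    x ⬝ᵥ (A *ᵥ y) ≤ (⨆ k, |hA.eigenvalues k|) * ‖WithLp.toLp 2 x‖ * ‖WithLp.toLp 2 y‖ := by
  calc x ⬝ᵥ (A *ᵥ y) = ⟪WithLp.toLp 2 x, A.toEuclideanLin (WithLp.toLp 2 y)⟫_ℝ := by
        simp [EuclideanSpace.inner_toLp_toLp, dotProduct_comm]
    _ ≤ ‖WithLp.toLp 2 x‖ * ‖A.toEuclideanLin (WithLp.toLp 2 y)‖ := real_inner_le_norm _ _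
    _ ≤ ‖WithLp.toLp 2 x‖ * ((⨆ k, |hA.eigenvalues k|) * ‖WithLp.toLp 2 y‖) := by
        gcongr
        exact hA.norm_toEuclideanLin_le _
    _ = _ := by ring

theorem norm_toLp_indicator_one {n : Type*} [Fintype n] (s : Finset n) :
    ‖WithLp.toLp 2 ((s : Set n).indicator (1 : n → ℝ))‖ = √(#s : ℝ) := by
  classical
  rw [EuclideanSpace.norm_eq]
  simp only [Set.indicator_apply, mem_coe]
  simp [apply_ite, sum_ite_mem]

theorem indicator_dotProduct_mulVec_indicator {n R : Type*} [Fintype n] [NonAssocSemiring R]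
    (A : Matrix n n R) (s t : Finset n) :
    (s : Set n).indicator 1 ⬝ᵥ (A *ᵥ (t : Set n).indicator 1) = ∑ p ∈ s ×ˢ t, A p.1 p.2 := by
  classical
  simp only [dotProduct, mulVec, Set.indicator_apply, mem_coe]
  simp [sum_product, ite_mul, mul_ite, sum_ite_mem]

theorem card_sub_mul_card_filter_le_sum {ι : Type*} (s : Finset ι) (p : ι → Prop)
    [DecidablePred p] {f : ι → ℝ} {c : ℝ} (hf : ∀ i, ¬ p i → f i = 1) (hc : ∀ i, c ≤ f i) :
    (#s : ℝ) - (1 - c) * #(s.filter p) ≤ ∑ i ∈ s, f i := by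
  have hdefect : ∑ i ∈ s.filter p, (f i - 1) = ∑ i ∈ s, (f i - 1) :=
    sum_filter_of_ne fun i _ hi => by_contra fun hp => hi (by rw [hf i hp, sub_self])
  have hlow : ∑ i ∈ s.filter p, (c - 1) ≤ ∑ i ∈ s.filter p, (f i - 1) :=
    sum_le_sum fun i _ => by linarith [hc i]
  rw [hdefect, sum_sub_distrib, sum_const, nsmul_eq_mul, sum_const, nsmul_eq_mul,
    sum_sub_distrib, sum_const, nsmul_eq_mul] at hlow
  linarith

theorem le_div_sq_of_mul_le_mul_sqrt {N d ρ : ℝ} (hN : 0 ≤ N) (hd : 0 < d)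
    (h : N * d ≤ ρ * √N) : N ≤ (ρ / d) ^ 2 := by
  rcases hN.eq_or_lt with rfl | hN
  · positivity
  have hsqrt : √N * d ≤ ρ := by
    have := Real.sqrt_pos.mpr hN
    nlinarith [Real.mul_self_sqrt hN.le]
  rw [div_pow, le_div_iff₀ (by positivity), ← Real.sq_sqrt hN.le, ← mul_pow]
  exact pow_le_pow_left₀ (by positivity) hsqrt 2

theorem stmt_2_general {V : Type*} [Fintype V] [DecidableEq V]
    (G : SimpleGraph V) [DecidableRel G.Adj] (A : Matrix V V ℝ) (hA : A.IsHermitian)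
    (h1 : ∀ i j : V, ¬ G.Adj i j → A i j = 1)
    (c : ℝ) (hc : IsLeast (Set.range fun p : V × V => A p.1 p.2) c)
    (ε : ℝ) (hcε : (1 - c) * ε < 1)
    (I J : Finset V)
    (hIJ : ((((I ×ˢ J).filter fun p => G.Adj p.1 p.2).card : ℝ))
      ≤ ε * (I.card : ℝ) * (J.card : ℝ)) :
    (I.card : ℝ) * (J.card : ℝ)
      ≤ ((⨆ i, |hA.eigenvalues i|) / (1 - (1 - c) * ε)) ^ 2 := by
  have hlb : ∀ p : V × V, c ≤ A p.1 p.2 := fun p => hc.2 ⟨p, rfl⟩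
  have hc1 : c ≤ 1 := by
    obtain ⟨⟨i, -⟩, -⟩ := hc.1
    simpa [h1 i i (G.irrefl)] using hlb (i, i)
  have hlow := card_sub_mul_card_filter_le_sum (I ×ˢ J) (fun p => G.Adj p.1 p.2)
    (fun p => h1 p.1 p.2) hlb
  have hupp := hA.dotProduct_mulVec_le ((I : Set V).indicator 1) ((J : Set V).indicator 1)
  rw [indicator_dotProduct_mulVec_indicator, norm_toLp_indicator_one, norm_toLp_indicator_one,
    mul_assoc, ← Real.sqrt_mul (Nat.cast_nonneg _)] at hupp
  rw [card_product, Nat.cast_mul] at hlow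
  refine le_div_sq_of_mul_le_mul_sqrt (by positivity) (by linarith) ?_
  nlinarith [mul_le_mul_of_nonneg_left hIJ (sub_nonneg.mpr hc1)]

/-- Cross version of the Lovász bound: if the number of ordered pairs `(i,j) ∈ I × J`
with `{i,j} ∈ E` is at most `ε|I||J|` and `(1-c)ε < 1`, where `c` is the minimal entry of `A`
and `ρ` its spectral radius, then `|I|·|J| ≤ (ρ / (1 - (1-c)ε))²`. -/
theorem stmt_2 {V : Type*} [Fintype V] [DecidableEq V] [Nonempty V]
    (G : SimpleGraph V) [DecidableRel G.Adj] (A : Matrix V V ℝ) (hA : A.IsHermitian)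
    (h1 : ∀ i j : V, ¬ G.Adj i j → A i j = 1)
    (c : ℝ) (hc : IsLeast (Set.range fun p : V × V => A p.1 p.2) c)
    (ε : ℝ) (hε : 0 ≤ ε) (hcε : (1 - c) * ε < 1)
    (I J : Finset V)
    (hIJ : ((((I ×ˢ J).filter fun p => G.Adj p.1 p.2).card : ℝ))
      ≤ ε * (I.card : ℝ) * (J.card : ℝ)) :
    (I.card : ℝ) * (J.card : ℝ)
      ≤ ((⨆ i, |hA.eigenvalues i|) / (1 - (1 - c) * ε)) ^ 2 :=
  stmt_2_general G A hA h1 c hc ε hcε I J hIJ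
end

section
/- Let k be a prime. If F is a k-town family of vectors in (ℤ/kℤ)^n, then |F| ≤ k^{⌊n/2⌋}. -/
/-!
The span `W` of a `k`-town family is totally isotropic for the dot product on `𝔽_kⁿ`, which is
nondegenerate, so `W ≤ W⊥` and `dim W + dim W⊥ = n` give `dim W ≤ ⌊n/2⌋`; the family lies in
`W`, which has `k ^ dim W` elements.
-/

open Module Submodule Finset

namespace LinearMap.BilinForm

variable {R M : Type*} [CommRing R] [AddCommGroup M] [Module R M]

theorem span_le_orthogonal_span {B : LinearMap.BilinForm R M} {s : Set M}
    (hs : ∀ x ∈ s, ∀ y ∈ s, B x y = 0) : span R s ≤ B.orthogonal (span R s) := by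
  refine span_le.2 fun y hy x hx => ?_
  have hker : span R s ≤ LinearMap.ker (B.flip y) := span_le.2 fun x hx' => hs x hx' y hy
  exact hker hx

variable {K V : Type*} [Field K] [AddCommGroup V] [Module K V] [FiniteDimensional K V]

theorem finrank_le_half_of_le_orthogonal {B : LinearMap.BilinForm K V} (hB : B.Nondegenerate)
    {W : Submodule K V} (hW : W ≤ B.orthogonal W) : finrank K W ≤ finrank K V / 2 := by
  have := finrank_mono hW
  rw [finrank_orthogonal hB] at this
  have := W.finrank_le
  omega

end LinearMap.BilinForm

theorem nondegenerate_dotProductBilin {K ι : Type*} [Field K] [Fintype ι] :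
    (dotProductBilin K K : LinearMap.BilinForm K (ι → K)).Nondegenerate := by
  refine ⟨fun v hv => ?_, fun w hw => ?_⟩
  · exact dotProduct_eq_zero_iff.1 hv
  · exact dotProduct_eq_zero_iff.1 fun v => by rw [dotProduct_comm]; exact hw v

theorem Finset.card_le_pow_finrank_span {K V : Type*} [Field K] [Finite K] [AddCommGroup V]
    [Module K V] (s : Finset V) : #s ≤ Nat.card K ^ finrank K (span K (s : Set V)) := by
  rw [← natCard_eq_pow_finrank]
  have : Finite (span K (s : Set V)) := Module.finite_of_finite K
  simpa using Nat.card_mono (Set.toFinite (span K (s : Set V) : Set V)) subset_span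

/-- For prime `k`, a `k`-town family `F ⊆ (ℤ/kℤ)^n` (all pairwise, including self,
scalar products vanish) satisfies `|F| ≤ k^⌊n/2⌋`. -/
theorem stmt_9 {k n : ℕ} (hk : Nat.Prime k)
    (F : Finset (Fin n → ZMod k))
    (hF : ∀ f₁ ∈ F, ∀ f₂ ∈ F, ∑ r, f₁ r * f₂ r = 0) :
    F.card ≤ k ^ (n / 2) := by
  have : Fact k.Prime := ⟨hk⟩
  have hisotropic := LinearMap.BilinForm.span_le_orthogonal_span
    (B := dotProductBilin (ZMod k) (ZMod k)) (s := (F : Set (Fin n → ZMod k))) hF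
  have hdim := LinearMap.BilinForm.finrank_le_half_of_le_orthogonal
    nondegenerate_dotProductBilin hisotropic
  calc #F ≤ k ^ finrank (ZMod k) (span (ZMod k) (F : Set (Fin n → ZMod k))) := by
        simpa using F.card_le_pow_finrank_span (K := ZMod k)
    _ ≤ k ^ (n / 2) := Nat.pow_le_pow_right hk.pos (by simpa using hdim)
end

section
/- Let k be a prime, let t ∈ ℤ/kℤ with t ≠ 0, and let F be a set of vectors in (ℤ/kℤ)^n such that the number of ordered pairs (f₁, f₂) ∈ F × F with (f₁, f₂) ≠ t is at most ε|F|², where ε < (k−1)/k. Then |F| ≤ C(t,k) · k^{n/2} / (1 − (k/(k−1))·ε), where C(t,k) = (1/(k−1)) · Σ_{a=1}^{k−1} max( |cos(2π t a / k)| , |sin(2π t a / k)| ) (here t a is computed with t viewed as an integer representative). -/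
/-!
For `a ≠ 0` write `ψₐ(x) = exp(2πi·ax/k)`. Summing `ψₐ((f₁, f₂) − t)` over `a = 1, …, k − 1`
gives `k − 1` when `(f₁, f₂) = t` and `−1` otherwise, so the total over `a` and all pairs is at
least `(k − 1 − kε)|F|²`.

For fixed `a`, the sum over pairs is `Re ∑_{g ∈ F} w S(g)` with `S(g) = ∑_{f ∈ F} ψₐ((g, f))` and
`w = ψₐ(−t)` of modulus one. By Cauchy–Schwarz its square is at most `|F| ∑_g (Re w S(g))²`, the
sum now running over all `g`. Since `(Re z)² = (Re z² + |z|²)/2`, the orthogonality identities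
`∑_g |S(g)|² = kⁿ|F|` and `∑_g S(g)² = kⁿ·#{f ∈ F | −f ∈ F}` bound this by
`kⁿ|F|·(1 + |Re w²|)/2 = kⁿ|F|·max(|Re w|, |Im w|)²`.
-/

open Finset

theorem Complex.re_sq_eq (y : ℂ) : y.re ^ 2 = ((y ^ 2).re + ‖y‖ ^ 2) / 2 := by
  rw [Complex.sq_norm, Complex.normSq_apply, sq y, Complex.mul_re]
  ring

theorem Complex.sum_re_mul_sq_le {α : Type*} (s : Finset α) (z : α → ℂ) {w : ℂ} (hw : ‖w‖ = 1)
    {M : ℝ} (hM : 0 ≤ M) (hMz : M ≤ ∑ x ∈ s, ‖z x‖ ^ 2) (hz : ∑ x ∈ s, z x ^ 2 = M) :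
    ∑ x ∈ s, (w * z x).re ^ 2 ≤ max |w.re| |w.im| ^ 2 * ∑ x ∈ s, ‖z x‖ ^ 2 := by
  have hsum : ∑ x ∈ s, (w * z x).re ^ 2 = (M * (w ^ 2).re + ∑ x ∈ s, ‖z x‖ ^ 2) / 2 := by
    simp_rw [Complex.re_sq_eq, mul_pow, norm_mul, hw, one_mul, ← sum_div, sum_add_distrib,
      ← Complex.re_sum, ← mul_sum, hz, mul_comm (w ^ 2), Complex.re_ofReal_mul]
  have hw2re : (w ^ 2).re = w.re ^ 2 - w.im ^ 2 := by
    rw [sq, Complex.mul_re]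
    ring
  have hw2 : w.re ^ 2 + w.im ^ 2 = 1 := by
    have := Complex.sq_norm w
    rw [hw, Complex.normSq_apply] at this
    linear_combination -this
  rw [hsum, hw2re]
  rcases le_total |w.re| |w.im| with h | h
  · rw [max_eq_right h, sq_abs]
    have : w.re ^ 2 ≤ w.im ^ 2 := sq_le_sq.mpr h
    nlinarith
  · rw [max_eq_left h, sq_abs]
    have : w.im ^ 2 ≤ w.re ^ 2 := sq_le_sq.mpr h
    nlinarith

theorem le_div_of_mul_sq_le_mul {D N B : ℝ} (hD : 0 < D) (hN : 0 ≤ N) (hB : 0 ≤ B)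
    (h : D * N ^ 2 ≤ N * B) : N ≤ B / D := by
  rw [le_div_iff₀ hD]
  rcases hN.eq_or_lt with rfl | hNpos
  · simpa using hB
  · refine le_of_mul_le_mul_right ?_ hNpos
    linarith

namespace AddChar

theorem map_sum_eq_prod {R M ι : Type*} [AddCommMonoid R] [CommMonoid M] (ψ : AddChar R M)
    (s : Finset ι) (f : ι → R) : ψ (∑ i ∈ s, f i) = ∏ i ∈ s, ψ (f i) := by
  classical
  induction s using Finset.induction_on with
  | empty => simp
  | insert i s hi ih => rw [sum_insert hi, prod_insert hi, map_add_eq_mul, ih]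

variable {R ι : Type*} [CommRing R] [Fintype R] [DecidableEq R] [Fintype ι] [DecidableEq ι]
  {ψ : AddChar R ℂ}

theorem sum_dotProduct_eq_ite (hψ : ψ.IsPrimitive) (u : ι → R) :
    ∑ g : ι → R, ψ (g ⬝ᵥ u) = if u = 0 then (Fintype.card R : ℂ) ^ Fintype.card ι else 0 := by
  simp_rw [dotProduct, map_sum_eq_prod]
  rw [← Fintype.prod_sum (fun r x => ψ (x * u r))]
  simp_rw [sum_mulShift _ hψ, apply_ite (Nat.cast : ℕ → ℂ), Nat.cast_zero]
  rw [Finset.prod_ite_zero]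
  simp [funext_iff]

noncomputable def expSum (ψ : AddChar R ℂ) (F : Finset (ι → R)) (g : ι → R) : ℂ :=
  ∑ f ∈ F, ψ (g ⬝ᵥ f)

theorem sum_expSum_mul (hψ : ψ.IsPrimitive) (F : Finset (ι → R)) (v : ι → R) :
    ∑ g, expSum ψ F g * ψ (g ⬝ᵥ v) =
      if -v ∈ F then (Fintype.card R : ℂ) ^ Fintype.card ι else 0 := by
  simp_rw [expSum, sum_mul, ← map_add_eq_mul, ← dotProduct_add]
  rw [sum_comm]
  simp_rw [sum_dotProduct_eq_ite hψ, add_eq_zero_iff_eq_neg, sum_ite_eq']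

theorem sum_expSum_sq (hψ : ψ.IsPrimitive) (F : Finset (ι → R)) :
    ∑ g, expSum ψ F g ^ 2 = (Fintype.card R : ℂ) ^ Fintype.card ι * #{f ∈ F | -f ∈ F} := by
  conv_lhs => enter [2, g]; rw [sq]; enter [2]; rw [expSum]
  simp_rw [mul_sum]
  rw [sum_comm]
  simp_rw [sum_expSum_mul hψ, sum_ite, sum_const_zero, add_zero, sum_const, nsmul_eq_mul,
    mul_comm]

theorem sum_norm_expSum_sq (hψ : ψ.IsPrimitive) (F : Finset (ι → R)) :
    ∑ g, ‖expSum ψ F g‖ ^ 2 = (Fintype.card R : ℝ) ^ Fintype.card ι * #F := by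
  have h : ∑ g, expSum ψ F g * starRingEnd ℂ (expSum ψ F g) =
      (Fintype.card R : ℂ) ^ Fintype.card ι * #F := by
    conv_lhs => enter [2, g, 2]; rw [expSum, map_sum]
    simp_rw [← map_neg_eq_conj, ← dotProduct_neg, mul_sum]
    rw [sum_comm]
    simp_rw [sum_expSum_mul hψ, neg_neg, sum_ite_mem, inter_self, sum_const, nsmul_eq_mul,
      mul_comm]
  simp_rw [Complex.mul_conj'] at h
  exact_mod_cast h

theorem sum_re_apply_dotProduct_sub_le (hψ : ψ.IsPrimitive) (F : Finset (ι → R)) (t : R) :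
    ∑ p ∈ F ×ˢ F, (ψ (p.1 ⬝ᵥ p.2 - t)).re ≤
      #F * (Fintype.card R : ℝ) ^ ((Fintype.card ι : ℝ) / 2) * max |(ψ t).re| |(ψ t).im| := by
  set q : ℝ := (Fintype.card R : ℝ)
  set w := ψ (-t)
  set m := max |(ψ t).re| |(ψ t).im|
  set x : (ι → R) → ℝ := fun g => (w * expSum ψ F g).re
  have hsplit : ∑ p ∈ F ×ˢ F, (ψ (p.1 ⬝ᵥ p.2 - t)).re = ∑ g ∈ F, x g := by
    rw [sum_product]
    refine sum_congr rfl fun g _ => ?_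
    simp only [x, expSum, mul_sum, Complex.re_sum, sub_eq_neg_add, map_add_eq_mul, w]
  have hm : max |w.re| |w.im| = m := by simp [w, m, map_neg_eq_conj]
  have hx : ∑ g, x g ^ 2 ≤ m ^ 2 * (q ^ Fintype.card ι * #F) := by
    rw [← hm, ← sum_norm_expSum_sq hψ F]
    refine Complex.sum_re_mul_sq_le univ _ (norm_apply ψ _)
      (M := q ^ Fintype.card ι * #{f ∈ F | -f ∈ F}) (by positivity) ?_
      (by rw [sum_expSum_sq hψ]; push_cast; rfl)
    rw [sum_norm_expSum_sq hψ]
    gcongr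
    exact filter_subset _ F
  have hq : (q ^ ((Fintype.card ι : ℝ) / 2)) ^ 2 = q ^ Fintype.card ι := by
    rw [Real.rpow_div_two_eq_sqrt _ (Nat.cast_nonneg _), Real.rpow_natCast, ← pow_mul, mul_comm,
      pow_mul, Real.sq_sqrt (Nat.cast_nonneg _)]
  have hcs : (∑ g ∈ F, x g) ^ 2 ≤ (#F * q ^ ((Fintype.card ι : ℝ) / 2) * m) ^ 2 :=
    calc (∑ g ∈ F, x g) ^ 2 ≤ #F * ∑ g ∈ F, x g ^ 2 := sq_sum_le_card_mul_sum_sq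
      _ ≤ #F * ∑ g, x g ^ 2 := by
        gcongr _ * ?_
        exact sum_le_univ_sum_of_nonneg fun _ => sq_nonneg _
      _ ≤ #F * (m ^ 2 * (q ^ Fintype.card ι * #F)) := by gcongr
      _ = (#F * q ^ ((Fintype.card ι : ℝ) / 2) * m) ^ 2 := by rw [mul_pow, mul_pow, hq]; ring
  rw [hsplit]
  exact (le_abs_self _).trans (abs_le_of_sq_le_sq hcs (by positivity))

end AddChar

namespace ZMod

variable {k : ℕ}

theorem natCast_ne_zero_of_mem_Icc {a : ℕ} (ha : a ∈ Icc 1 (k - 1)) : (a : ZMod k) ≠ 0 := by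
  rw [mem_Icc] at ha
  rw [Ne, natCast_eq_zero_iff]
  exact Nat.not_dvd_of_pos_of_lt (by omega) (by omega)

theorem stdAddChar_natCast [NeZero k] (j : ℕ) :
    stdAddChar (j : ZMod k) = Complex.exp ((2 * Real.pi * j / k : ℝ) * Complex.I) := by
  rw [← Int.cast_natCast, stdAddChar_coe]
  push_cast
  ring_nf

theorem sum_re_stdAddChar_mul_dotProduct_sub_le [Fact k.Prime] {ι : Type*} [Fintype ι]
    [DecidableEq ι] (F : Finset (ι → ZMod k)) (t : ZMod k) {a : ℕ} (ha : (a : ZMod k) ≠ 0) :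
    ∑ p ∈ F ×ˢ F, (stdAddChar ((a : ZMod k) * (p.1 ⬝ᵥ p.2 - t))).re ≤
      #F * (k : ℝ) ^ ((Fintype.card ι : ℝ) / 2) *
        max |Real.cos (2 * Real.pi * ((t.val * a : ℕ) : ℝ) / k)|
          |Real.sin (2 * Real.pi * ((t.val * a : ℕ) : ℝ) / k)| := by
  have hψ := AddChar.IsPrimitive.of_ne_one (isPrimitive_stdAddChar k ha)
  have hat : (a : ZMod k) * t = ((t.val * a : ℕ) : ZMod k) := by
    push_cast [natCast_zmod_val]
    ring
  have := AddChar.sum_re_apply_dotProduct_sub_le hψ F t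
  simpa only [AddChar.mulShift_apply, hat, ZMod.card, stdAddChar_natCast,
    Complex.exp_ofReal_mul_I_re, Complex.exp_ofReal_mul_I_im] using this

variable [NeZero k]

theorem sum_Icc_stdAddChar_natCast_mul (x : ZMod k) :
    ∑ a ∈ Icc 1 (k - 1), stdAddChar ((a : ZMod k) * x) = (if x = 0 then (k : ℂ) else 0) - 1 := by
  have hIcc : ∑ a ∈ Icc 1 (k - 1), stdAddChar ((a : ZMod k) * x) =
      ∑ y ∈ univ.erase 0, stdAddChar (y * x) := by
    refine sum_nbij' (fun a => (a : ZMod k)) val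
      (fun a ha => mem_erase.mpr ⟨natCast_ne_zero_of_mem_Icc ha, mem_univ _⟩) (fun y hy => ?_)
      (fun a ha => val_cast_of_lt ?_) (fun y _ => natCast_zmod_val y) (fun _ _ => rfl)
    · have := val_lt y
      have := (val_ne_zero y).mpr (ne_of_mem_erase hy)
      rw [mem_Icc]
      omega
    · have := NeZero.pos k
      rw [mem_Icc] at ha
      omega
  rw [hIcc, sum_erase_eq_sub (mem_univ _), zero_mul, AddChar.map_zero_eq_one,
    AddChar.sum_mulShift x (isPrimitive_stdAddChar k), ZMod.card]
  push_cast
  rfl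

theorem sum_Icc_sum_re_stdAddChar {α : Type*} (S : Finset α) (φ : α → ZMod k) (t : ZMod k) :
    ∑ a ∈ Icc 1 (k - 1), ∑ p ∈ S, (stdAddChar ((a : ZMod k) * (φ p - t))).re =
      k * #{p ∈ S | φ p = t} - #S := by
  rw [sum_comm]
  simp_rw [← Complex.re_sum, sum_Icc_stdAddChar_natCast_mul, sub_eq_zero]
  simp [sum_sub_distrib, sum_ite, mul_comm]

theorem le_sum_Icc_sum_re_stdAddChar {α : Type*} (S : Finset α) (φ : α → ZMod k) (t : ZMod k)
    {ε : ℝ} (hS : #{p ∈ S | φ p ≠ t} ≤ ε * #S) :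
    (k - 1 - k * ε) * #S ≤
      ∑ a ∈ Icc 1 (k - 1), ∑ p ∈ S, (stdAddChar ((a : ZMod k) * (φ p - t))).re := by
  have hcard : (#{p ∈ S | φ p = t} : ℝ) + #{p ∈ S | φ p ≠ t} = #S := by
    exact_mod_cast card_filter_add_card_filter_not (fun p => φ p = t)
  rw [sum_Icc_sum_re_stdAddChar]
  have hk : (0 : ℝ) ≤ k := Nat.cast_nonneg k
  nlinarith

end ZMod

theorem stmt_13_general {k n : ℕ} (hk : Nat.Prime k) (t : ZMod k)
    (F : Finset (Fin n → ZMod k)) (ε : ℝ)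
    (hεk : ε < ((k : ℝ) - 1) / k)
    (hF : (((F ×ˢ F).filter fun p => ∑ r, p.1 r * p.2 r ≠ t).card : ℝ)
      ≤ ε * (F.card : ℝ) ^ 2) :
    (F.card : ℝ) ≤
      ((1 / ((k : ℝ) - 1)) * ∑ a ∈ Finset.Icc 1 (k - 1),
          max |Real.cos (2 * Real.pi * ((t.val * a : ℕ) : ℝ) / k)|
              |Real.sin (2 * Real.pi * ((t.val * a : ℕ) : ℝ) / k)|)
        * (k : ℝ) ^ ((n : ℝ) / 2) / (1 - ((k : ℝ) / ((k : ℝ) - 1)) * ε) := by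
  have := Fact.mk hk
  set C := ∑ a ∈ Icc 1 (k - 1), max |Real.cos (2 * Real.pi * ((t.val * a : ℕ) : ℝ) / k)|
    |Real.sin (2 * Real.pi * ((t.val * a : ℕ) : ℝ) / k)|
  have hk1 : (1 : ℝ) < k := by exact_mod_cast hk.one_lt
  have hD : 0 < (k : ℝ) - 1 - k * ε := by
    have := (lt_div_iff₀ (by linarith)).mp hεk
    linarith
  have hrhs : 1 / ((k : ℝ) - 1) * C * (k : ℝ) ^ ((n : ℝ) / 2) / (1 - k / ((k : ℝ) - 1) * ε) =
      (k : ℝ) ^ ((n : ℝ) / 2) * C / ((k : ℝ) - 1 - k * ε) := by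
    have : (k : ℝ) - 1 ≠ 0 := (sub_pos.mpr hk1).ne'
    field_simp
  have hFF : (#(F ×ˢ F) : ℝ) = #F ^ 2 := by rw [card_product, Nat.cast_mul, sq]
  have hbad : (#{p ∈ F ×ˢ F | p.1 ⬝ᵥ p.2 ≠ t} : ℝ) ≤ ε * #(F ×ˢ F) := hFF ▸ hF
  rw [hrhs]
  refine le_div_of_mul_sq_le_mul hD (Nat.cast_nonneg _) (by positivity) ?_
  calc ((k : ℝ) - 1 - k * ε) * #F ^ 2
      ≤ ∑ a ∈ Icc 1 (k - 1), ∑ p ∈ F ×ˢ F,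
          (ZMod.stdAddChar ((a : ZMod k) * (p.1 ⬝ᵥ p.2 - t))).re :=
        hFF ▸ ZMod.le_sum_Icc_sum_re_stdAddChar (F ×ˢ F) (fun p => p.1 ⬝ᵥ p.2) t hbad
    _ ≤ ∑ a ∈ Icc 1 (k - 1), #F * (k : ℝ) ^ ((n : ℝ) / 2) *
          max |Real.cos (2 * Real.pi * ((t.val * a : ℕ) : ℝ) / k)|
            |Real.sin (2 * Real.pi * ((t.val * a : ℕ) : ℝ) / k)| :=
        sum_le_sum fun a ha => by
          simpa only [Fintype.card_fin] using ZMod.sum_re_stdAddChar_mul_dotProduct_sub_le F t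
            (ZMod.natCast_ne_zero_of_mem_Icc ha)
    _ = #F * ((k : ℝ) ^ ((n : ℝ) / 2) * C) := by rw [← mul_sum, mul_assoc]

/-- For prime `k` and `t ≠ 0`: if at most `ε|F|²` ordered pairs of vectors of `F` have
scalar product different from `t` and `ε < (k-1)/k`, then
`|F| ≤ C(t,k) · k^(n/2) / (1 - (k/(k-1))·ε)`, where
`C(t,k) = (1/(k-1)) · ∑_{a=1}^{k-1} max(|cos(2π t a / k)|, |sin(2π t a / k)|)`. -/
theorem stmt_13 {k n : ℕ} (hk : Nat.Prime k) (t : ZMod k) (ht : t ≠ 0)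
    (F : Finset (Fin n → ZMod k)) (ε : ℝ) (hε : 0 ≤ ε)
    (hεk : ε < ((k : ℝ) - 1) / k)
    (hF : (((F ×ˢ F).filter fun p => ∑ r, p.1 r * p.2 r ≠ t).card : ℝ)
      ≤ ε * (F.card : ℝ) ^ 2) :
    (F.card : ℝ) ≤
      ((1 / ((k : ℝ) - 1)) * ∑ a ∈ Finset.Icc 1 (k - 1),
          max |Real.cos (2 * Real.pi * ((t.val * a : ℕ) : ℝ) / k)|
              |Real.sin (2 * Real.pi * ((t.val * a : ℕ) : ℝ) / k)|)
        * (k : ℝ) ^ ((n : ℝ) / 2) / (1 - ((k : ℝ) / ((k : ℝ) - 1)) * ε) :=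
  stmt_13_general hk t F ε hεk hF
end
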